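/- arXiv:1512.09303 — 3 statements merged into one kernel-verified Lean document; each statement's English description precedes it below -/
import Mathlib

section
/- Let X be a nonempty compact Hausdorff space and E a commutative Banach algebra with unit. Then C(X,E) is a Ditkin algebra if and only if E is a Ditkin algebra. -/
open WeakDual

/-- For a commutative Banach algebra `A` (over `ℂ`) and a character `φ`, `Jset A φ` is the ideal
`J_φ` of elements whose Gelfand transform vanishes on a neighbourhood of `φ` in the character
space `M(A)` (with the weak-star topology). -/
def Jset (A : Type*) [NormedCommRing A] [NormedAlgebra ℂ A]
    (φ : characterSpace ℂ A) : Set A :=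
  {a : A | ∀ᶠ χ in nhds φ, χ a = 0}

/-- `A` is a Ditkin algebra: for every character `φ` and every `a` with `â(φ) = 0`
(i.e. `a ∈ I_φ`), `a` lies in the closure of `a • J_φ`. -/
def IsDitkinAlgebra (A : Type*) [NormedCommRing A] [NormedAlgebra ℂ A] : Prop :=
  ∀ (φ : characterSpace ℂ A) (a : A), φ a = 0 → a ∈ closure ((a * ·) '' Jset A φ)

/-- `A` has bounded relative units: for every character `φ` there is `m > 0` such that for
every compact `K ⊆ M(A) \ {φ}` there is `a ∈ J_φ` with `â = 1` on `K` and `‖a‖ ≤ m`. -/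
def HasBoundedRelativeUnits (A : Type*) [NormedCommRing A] [NormedAlgebra ℂ A] : Prop :=
  ∀ φ : characterSpace ℂ A, ∃ m : ℝ, 0 < m ∧
    ∀ K : Set (characterSpace ℂ A), IsCompact K → φ ∉ K →
      ∃ a ∈ Jset A φ, (∀ χ ∈ K, χ a = 1) ∧ ‖a‖ ≤ m

/-- `A` is a strong Ditkin algebra: for each character `φ`, the maximal ideal
`I_φ = {a | â(φ) = 0}` has a bounded approximate identity contained in `J_φ`. -/
def IsStrongDitkinAlgebra (A : Type*) [NormedCommRing A] [NormedAlgebra ℂ A] : Prop :=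
  ∀ φ : characterSpace ℂ A, ∃ m : ℝ, 0 < m ∧ ∃ u : ℕ → A,
    (∀ n, u n ∈ Jset A φ ∧ ‖u n‖ ≤ m) ∧
    ∀ a : A, φ a = 0 →
      Filter.Tendsto (fun n => ‖a - a * u n‖) Filter.atTop (nhds 0)

/-- `A` is semisimple: the Gelfand transform is injective, i.e. an element annihilated by all
characters is zero. -/
def IsSemisimple (A : Type*) [NormedCommRing A] [NormedAlgebra ℂ A] : Prop :=
  ∀ a : A, (∀ φ : characterSpace ℂ A, φ a = 0) → a = 0

/-- An admissible quadruple `(X, E, B, B̃)`: `X` is a compact Hausdorff space, `E` a commutative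
unital Banach algebra, `B` a natural `ℂ`-valued function algebra on `X` (realised by an injective
unital algebra embedding `incB : B →ₐ[ℂ] C(X, ℂ)` with continuous point evaluations, separating
points, and every character of `B` given by evaluation at a point of `X`), `B̃` an `E`-valued
function algebra on `X` (realised via `incT : B̃ →ₐ[ℂ] C(X, E)`; note that the constant
function `1_E` is automatically in the image, being the image of `1`), such that
`B·E ⊆ B̃` and `{λ ∘ f : f ∈ B̃, λ ∈ M(E)} ⊆ B`. -/
structure AdmissibleQuadruple
    (X : Type*) [TopologicalSpace X] [CompactSpace X] [T2Space X]
    (E : Type*) [NormedCommRing E] [NormedAlgebra ℂ E] [CompleteSpace E]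
    (B : Type*) [NormedCommRing B] [NormedAlgebra ℂ B] [CompleteSpace B]
    (Bt : Type*) [NormedCommRing Bt] [NormedAlgebra ℂ Bt] [CompleteSpace Bt] where
  incB : B →ₐ[ℂ] C(X, ℂ)
  incB_injective : Function.Injective incB
  incB_eval_continuous : ∀ x : X, Continuous fun g : B => incB g x
  incB_separates : ∀ x y : X, x ≠ y → ∃ g : B, incB g x ≠ incB g y
  natB : ∀ χ : characterSpace ℂ B, ∃ x : X, ∀ g : B, χ g = incB g x
  incT : Bt →ₐ[ℂ] C(X, E)
  incT_injective : Function.Injective incT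
  incT_eval_continuous : ∀ x : X, Continuous fun f : Bt => incT f x
  incT_separates : ∀ x y : X, x ≠ y → ∃ f : Bt, incT f x ≠ incT f y
  smul_mem : ∀ (g : B) (a : E), ∃ f : Bt, ∀ x : X, incT f x = incB g x • a
  comp_mem : ∀ (ψ : characterSpace ℂ E) (f : Bt), ∃ g : B, ∀ x : X, incB g x = ψ (incT f x)

variable {X : Type*} [TopologicalSpace X] [CompactSpace X] [T2Space X]
  {E : Type*} [NormedCommRing E] [NormedAlgebra ℂ E] [CompleteSpace E]
  {B : Type*} [NormedCommRing B] [NormedAlgebra ℂ B] [CompleteSpace B]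
  {Bt : Type*} [NormedCommRing Bt] [NormedAlgebra ℂ Bt] [CompleteSpace Bt]

/-- An admissible quadruple is natural if the associated map
`β : X × M(E) → M(B̃)`, `(x, ψ) ↦ ψ ∘ e_x`, is bijective; equivalently, every character of `B̃`
has a unique representation `f ↦ ψ ((incT f) x)`. -/
def AdmissibleQuadruple.IsNatural (Q : AdmissibleQuadruple X E B Bt) : Prop :=
  ∀ φ : characterSpace ℂ Bt, ∃! p : X × characterSpace ℂ E,
    ∀ f : Bt, φ f = p.2 (Q.incT f p.1)

/-- An admissible quadruple is tight if for each `f ∈ B̃` the `B`-valued map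
`λ ↦ λ ∘ f` on `M(E)` is continuous (from the weak-star topology to the norm of `B`). -/
def AdmissibleQuadruple.IsTight (Q : AdmissibleQuadruple X E B Bt) : Prop :=
  ∀ f : Bt, ∃ h : C(characterSpace ℂ E, B),
    ∀ (ψ : characterSpace ℂ E) (x : X), Q.incB (h ψ) x = ψ (Q.incT f x)


/-!
Every character of `C(X, E)` has the form `f ↦ ψ (f x)`: its restriction to the scalar functions
is evaluation at a point `x`, and its restriction to the constants is a character `ψ` of `E`.

Ditkin's condition passes to quotients by continuous surjective homomorphisms, so evaluation at a
point shows that `E` is Ditkin when `C(X, E)` is. Conversely, let `φ = ψ ∘ ev_{x₀}` and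
`ψ (a x₀) = 0`. Pick `u ∈ J_ψ` with `a x₀ * u` close to `a x₀` and a scalar cut-off `k` equal to
`1` near `x₀` and supported where `a - a u` is small. Then `g = u + (1 - k)(1 - u)` equals `u`
near `x₀`, hence lies in `J_φ`, and `a - a g = k (a - a u)` is small.
-/

namespace WeakDual.CharacterSpace

variable {𝕜 A A' : Type*} [NontriviallyNormedField 𝕜]
  [NormedRing A] [NormedAlgebra 𝕜 A] [CompleteSpace A] [NormedRing A'] [NormedAlgebra 𝕜 A']

noncomputable def comap (θ : A →ₐ[𝕜] A') : C(characterSpace 𝕜 A', characterSpace 𝕜 A) where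
  toFun χ := equivAlgHom.symm ((toAlgHom χ).comp θ)
  continuous_toFun := Continuous.subtype_mk
    (continuous_of_continuous_eval fun a => (eval_continuous (θ a)).comp continuous_subtype_val) _

end WeakDual.CharacterSpace

open WeakDual.CharacterSpace Topology

section Ditkin

variable {A A' : Type*} [NormedCommRing A] [NormedAlgebra ℂ A] [CompleteSpace A]
  [NormedCommRing A'] [NormedAlgebra ℂ A']

theorem map_mem_Jset (θ : A →ₐ[ℂ] A') {ψ : characterSpace ℂ A'} {a : A}
    (ha : a ∈ Jset A (comap θ ψ)) : θ a ∈ Jset A' ψ :=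
  ((comap θ).continuous.tendsto ψ).eventually ha

theorem IsDitkinAlgebra.of_surjective (hA : IsDitkinAlgebra A) (θ : A →ₐ[ℂ] A')
    (hθ : Continuous θ) (hθs : Function.Surjective θ) : IsDitkinAlgebra A' := by
  intro ψ b hb
  obtain ⟨a, rfl⟩ := hθs b
  have ha : a ∈ closure ((a * ·) '' Jset A (comap θ ψ)) := hA (comap θ ψ) a hb
  refine closure_mono ?_ (image_closure_subset_closure_image hθ (Set.mem_image_of_mem θ ha))
  rintro _ ⟨_, ⟨j, hj, rfl⟩, rfl⟩
  exact ⟨θ j, map_mem_Jset θ hj, (map_mul θ a j).symm⟩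

end Ditkin

namespace ContinuousMap

variable (Y : Type*) [TopologicalSpace Y]

@[simps]
def constAlgHom (R A : Type*) [CommSemiring R] [Semiring A] [Algebra R A] [TopologicalSpace A]
    [IsTopologicalSemiring A] : A →ₐ[R] C(Y, A) where
  toFun := const Y
  map_one' := rfl
  map_mul' _ _ := rfl
  map_zero' := rfl
  map_add' _ _ := rfl
  commutes' _ := rfl

variable (A : Type*) [NormedRing A] [NormedAlgebra ℂ A]

noncomputable def scalarAlgHom : C(Y, ℂ) →ₐ[ℂ] C(Y, A) :=
  (Algebra.ofId ℂ A).compLeftContinuous ℂ (continuous_algebraMap ℂ A)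

variable {Y A}

@[simp]
theorem scalarAlgHom_apply (k : C(Y, ℂ)) (y : Y) : scalarAlgHom Y A k y = algebraMap ℂ A (k y) :=
  rfl

theorem exists_eventuallyEq_one_norm_scalarAlgHom_mul_lt [CompactSpace Y] [T2Space Y]
    (d : C(Y, A)) {x : Y} {ε : ℝ} (hd : ‖d x‖ < ε) :
    ∃ k : C(Y, ℂ), k =ᶠ[𝓝 x] 1 ∧ ‖scalarAlgHom Y A k * d‖ < ε := by
  set U := {y | ‖d y‖ < ε}
  have hU : IsOpen U := isOpen_lt d.continuous.norm continuous_const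
  obtain ⟨K, hKx, hKU, hK⟩ := local_compact_nhds (hU.mem_nhds hd)
  obtain ⟨f, hf1, hf0, -, hf01⟩ := exists_continuous_one_zero_of_isCompact hK hU.isClosed_compl
    (Set.disjoint_compl_right_iff_subset.2 hKU)
  refine ⟨⟨fun y => (f y : ℂ), by fun_prop⟩, Filter.eventually_of_mem hKx fun y hy => ?_, ?_⟩
  · simp [hf1 hy]
  rw [norm_lt_iff _ ((norm_nonneg _).trans_lt hd)]
  intro y
  have hy : ‖(scalarAlgHom Y A ⟨fun y => (f y : ℂ), by fun_prop⟩ * d) y‖ = f y * ‖d y‖ := by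
    simp [Algebra.algebraMap_eq_smul_one, norm_smul, abs_of_nonneg (hf01 y).1]
  rw [hy]
  by_cases hyU : y ∈ U
  · exact (mul_le_of_le_one_left (norm_nonneg _) (hf01 y).2).trans_lt hyU
  · rw [hf0 hyU, Pi.zero_apply, zero_mul]
    exact (norm_nonneg _).trans_lt hd

end ContinuousMap

namespace WeakDual.CharacterSpace

variable {Y A : Type*} [TopologicalSpace Y] [CompactSpace Y] [T2Space Y]
  [NormedRing A] [NormedAlgebra ℂ A]

noncomputable def basePoint (φ : characterSpace ℂ C(Y, A)) : Y :=
  (homeoEval Y ℂ).symm (comap (ContinuousMap.scalarAlgHom Y A) φ)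

theorem continuous_basePoint : Continuous (basePoint : characterSpace ℂ C(Y, A) → Y) :=
  (homeoEval Y ℂ).symm.continuous.comp (comap _).continuous

theorem apply_scalarAlgHom (φ : characterSpace ℂ C(Y, A)) (k : C(Y, ℂ)) :
    φ (ContinuousMap.scalarAlgHom Y A k) = k (basePoint φ) :=
  (DFunLike.congr_fun ((homeoEval Y ℂ).apply_symm_apply
    (comap (ContinuousMap.scalarAlgHom Y A) φ)) k).symm

variable [CompleteSpace A]

theorem apply_eq_apply_basePoint (φ : characterSpace ℂ C(Y, A)) (f : C(Y, A)) :
    φ f = comap (ContinuousMap.constAlgHom Y ℂ A) φ (f (basePoint φ)) := by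
  set d := f - ContinuousMap.const Y (f (basePoint φ))
  suffices φ d = 0 by rwa [map_sub, sub_eq_zero] at this
  set S := (ContinuousMap.scalarAlgHom Y A · * d) '' {k | k (basePoint φ) = 1}
  -- `φ` takes the value `φ d` on `S`, and `0 ∈ closure S` because `d` vanishes at the base point.
  have hS : (0 : C(Y, A)) ∈ closure S := Metric.mem_closure_iff.2 fun ε hε => by
    obtain ⟨k, hk1, hk⟩ := ContinuousMap.exists_eventuallyEq_one_norm_scalarAlgHom_mul_lt d
      (x := basePoint φ) (by simpa [d])
    exact ⟨_, ⟨k, hk1.eq_of_nhds, rfl⟩, by simpa using hk⟩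
  have hφS : S ⊆ φ ⁻¹' {φ d} := by
    rintro _ ⟨k, hk, rfl⟩
    rw [Set.mem_preimage, Set.mem_singleton_iff, map_mul, apply_scalarAlgHom, hk, one_mul]
  simpa [eq_comm] using closure_minimal hφS (isClosed_singleton.preimage (map_continuous φ)) hS

theorem eventually_apply_eq_of_eventuallyEq {φ : characterSpace ℂ C(Y, A)} {f g : C(Y, A)}
    (hfg : f =ᶠ[𝓝 (basePoint φ)] g) : ∀ᶠ χ in 𝓝 φ, χ f = χ g := by
  filter_upwards [(continuous_basePoint.tendsto φ).eventually hfg] with χ hχ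
  rw [apply_eq_apply_basePoint χ f, apply_eq_apply_basePoint χ g, hχ]

end WeakDual.CharacterSpace

namespace IsDitkinAlgebra

variable {Y A : Type*} [TopologicalSpace Y] [CompactSpace Y] [T2Space Y]
  [NormedCommRing A] [NormedAlgebra ℂ A] [CompleteSpace A]

theorem of_continuousMap [Nonempty Y] (h : IsDitkinAlgebra C(Y, A)) : IsDitkinAlgebra A :=
  let x : Y := Classical.arbitrary Y
  h.of_surjective (ContinuousMap.evalAlgHom ℂ A x) (continuous_eval_const x)
    fun a => ⟨ContinuousMap.const Y a, rfl⟩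

theorem continuousMap (h : IsDitkinAlgebra A) : IsDitkinAlgebra C(Y, A) := by
  intro φ a ha
  set x₀ := basePoint φ
  set c := ContinuousMap.constAlgHom Y ℂ A
  set θ := ContinuousMap.scalarAlgHom Y A
  set ψ := comap c φ
  have hψ : ψ (a x₀) = 0 := by rwa [← apply_eq_apply_basePoint]
  rw [Metric.mem_closure_iff]
  intro ε hε
  obtain ⟨_, ⟨u, hu, rfl⟩, hau⟩ := Metric.mem_closure_iff.1 (h ψ (a x₀) hψ) ε hε
  obtain ⟨k, hk1, hk⟩ := ContinuousMap.exists_eventuallyEq_one_norm_scalarAlgHom_mul_lt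
    (a - a * c u) (x := x₀) (by simpa [dist_eq_norm, c] using hau)
  set g := c u + θ (1 - k) * (1 - c u)
  have hg : g =ᶠ[𝓝 x₀] c u := hk1.mono fun y hy => by simp [g, θ, hy]
  refine ⟨a * g, ⟨g, ?_, rfl⟩, ?_⟩
  · filter_upwards [eventually_apply_eq_of_eventuallyEq hg, map_mem_Jset c hu] with χ hχ hχu
    rw [hχ, hχu]
  · have hag : a - a * g = θ k * (a - a * c u) := by
      simp only [g, map_sub, map_one]
      ring
    rwa [dist_eq_norm, hag]

end IsDitkinAlgebra

/-- For a nonempty compact Hausdorff space `X` and a commutative unital Banach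
algebra `E`, the algebra `C(X, E)` (uniform norm) is Ditkin iff `E` is Ditkin. -/
theorem isDitkinAlgebra_continuousMap_iff
    (X : Type*) [TopologicalSpace X] [CompactSpace X] [T2Space X] [Nonempty X]
    (E : Type*) [NormedCommRing E] [NormedAlgebra ℂ E] [CompleteSpace E] :
    IsDitkinAlgebra C(X, E) ↔ IsDitkinAlgebra E :=
  ⟨IsDitkinAlgebra.of_continuousMap, IsDitkinAlgebra.continuousMap⟩
end

section
/- Let A be a commutative Banach algebra with identity. Then the following are equivalent: (1) A has bounded relative units; (2) for each φ ∈ M(A) there exists a constant c_φ > 0 with the following property: for every closed subset K of M(A) with φ ∉ K, there exists x ∈ A such that ‖x‖ ≤ c_φ, x̂ = 0 on K, and x̂ = 1 on some neighborhood of φ. -/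
open WeakDual

variable {X : Type*} [TopologicalSpace X] [CompactSpace X] [T2Space X]
  {E : Type*} [NormedCommRing E] [NormedAlgebra ℂ E] [CompleteSpace E]
  {B : Type*} [NormedCommRing B] [NormedAlgebra ℂ B] [CompleteSpace B]
  {Bt : Type*} [NormedCommRing Bt] [NormedAlgebra ℂ Bt] [CompleteSpace Bt]

open Filter Topology

section

variable {A : Type*} [NormedCommRing A] [NormedAlgebra ℂ A]

theorem characterSpace_apply_one_sub (χ : characterSpace ℂ A) (a : A) :
    χ (1 - a) = 1 - χ a := by
  rw [map_sub, map_one]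

theorem one_sub_mem_Jset_iff {φ : characterSpace ℂ A} {a : A} :
    1 - a ∈ Jset A φ ↔ ∀ᶠ χ in 𝓝 φ, χ a = 1 := by
  simp only [Jset, Set.mem_ofPred_eq, characterSpace_apply_one_sub, sub_eq_zero]
  exact eventually_congr (.of_forall fun χ => eq_comm)

theorem eventually_apply_one_sub_eq_one_iff {φ : characterSpace ℂ A} {a : A} :
    (∀ᶠ χ in 𝓝 φ, χ (1 - a) = 1) ↔ a ∈ Jset A φ := by
  simp only [Jset, Set.mem_ofPred_eq, characterSpace_apply_one_sub, sub_eq_self]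

end

/-- For a commutative unital Banach algebra `A`, having bounded relative units
is equivalent to: for each character `φ` there is `c_φ > 0` such that for every closed
`K ⊆ M(A)` with `φ ∉ K` there is `x ∈ A` with `‖x‖ ≤ c_φ`, `x̂ = 0` on `K`, and `x̂ = 1` on a
neighbourhood of `φ`. -/
theorem hasBoundedRelativeUnits_iff
    (A : Type*) [NormedCommRing A] [NormedAlgebra ℂ A] [CompleteSpace A] :
    HasBoundedRelativeUnits A ↔
      ∀ φ : characterSpace ℂ A, ∃ c : ℝ, 0 < c ∧
        ∀ K : Set (characterSpace ℂ A), IsClosed K → φ ∉ K →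
          ∃ x : A, ‖x‖ ≤ c ∧ (∀ χ ∈ K, χ x = 0) ∧ (∀ᶠ χ in nhds φ, χ x = 1) := by
  -- `a ↦ 1 - a` swaps the two kinds of elements, at the cost of `‖1‖` in the norm bound.
  constructor
  · intro h φ
    obtain ⟨m, hm, hunits⟩ := h φ
    refine ⟨‖(1 : A)‖ + m, by positivity, fun K hK hφK => ?_⟩
    obtain ⟨a, haJ, haK, ha⟩ := hunits K hK.isCompact hφK
    refine ⟨1 - a, (norm_sub_le _ _).trans (by gcongr), fun χ hχ => ?_,
      eventually_apply_one_sub_eq_one_iff.mpr haJ⟩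
    rw [characterSpace_apply_one_sub, haK χ hχ, sub_self]
  · intro h φ
    obtain ⟨c, hc, hbump⟩ := h φ
    refine ⟨‖(1 : A)‖ + c, by positivity, fun K hK hφK => ?_⟩
    obtain ⟨x, hx, hxK, hxφ⟩ := hbump K hK.isClosed hφK
    refine ⟨1 - x, one_sub_mem_Jset_iff.mpr hxφ, fun χ hχ => ?_,
      (norm_sub_le _ _).trans (by gcongr)⟩
    rw [characterSpace_apply_one_sub, hxK χ hχ, sub_zero]
end

section
/- Let (X,E,B,B̃) be an admissible quadruple. Then the associated map β : X × M(E) → M(B̃), (x,ψ) ↦ ψ∘e_x, is well defined and injective. -/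
open WeakDual

variable {X : Type*} [TopologicalSpace X] [CompactSpace X] [T2Space X]
  {E : Type*} [NormedCommRing E] [NormedAlgebra ℂ E] [CompleteSpace E]
  {B : Type*} [NormedCommRing B] [NormedAlgebra ℂ B] [CompleteSpace B]
  {Bt : Type*} [NormedCommRing Bt] [NormedAlgebra ℂ Bt] [CompleteSpace Bt]

/-! `ψ ∘ e_x` is a composite of unital algebra homomorphisms, hence a character. For injectivity,
the functions `g · 1_E` (`g ∈ B`) in `B̃` are sent by every `ψ` to `g`, so `B` separating points
recovers `x`; the constants `1 · a` (`a ∈ E`) then recover `ψ`. -/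

theorem WeakDual.CharacterSpace.exists_apply_eq_apply_eval
    {𝕜 A Y R : Type*} [NontriviallyNormedField 𝕜]
    [NormedRing A] [NormedAlgebra 𝕜 A] [CompleteSpace A] [TopologicalSpace Y]
    [NormedCommRing R] [NormedAlgebra 𝕜 R] [CompleteSpace R]
    (T : A →ₐ[𝕜] C(Y, R)) (y : Y) (ψ : characterSpace 𝕜 R) :
    ∃ φ : characterSpace 𝕜 A, ∀ f : A, φ f = ψ (T f y) :=
  ⟨CharacterSpace.equivAlgHom.symm
      ((CharacterSpace.equivAlgHom ψ).comp ((ContinuousMap.evalAlgHom 𝕜 R y).comp T)),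
    fun _ => rfl⟩

namespace AdmissibleQuadruple

variable (Q : AdmissibleQuadruple X E B Bt)

theorem exists_incT_eq_const (a : E) : ∃ f : Bt, ∀ x : X, Q.incT f x = a := by
  obtain ⟨f, hf⟩ := Q.smul_mem 1 a
  exact ⟨f, fun x => by rw [hf x, map_one, ContinuousMap.one_apply, one_smul]⟩

theorem exists_character_incT_eq_incB (g : B) :
    ∃ f : Bt, ∀ (ψ : characterSpace ℂ E) (x : X), ψ (Q.incT f x) = Q.incB g x := by
  obtain ⟨f, hf⟩ := Q.smul_mem g 1
  exact ⟨f, fun ψ x => by rw [hf x, map_smul, map_one, smul_eq_mul, mul_one]⟩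

theorem eq_of_character_incT_eq {x x' : X} {ψ ψ' : characterSpace ℂ E}
    (h : ∀ f : Bt, ψ (Q.incT f x) = ψ' (Q.incT f x')) : x = x' := by
  by_contra hne
  obtain ⟨g, hg⟩ := Q.incB_separates x x' hne
  obtain ⟨f, hf⟩ := Q.exists_character_incT_eq_incB g
  exact hg (by rw [← hf ψ, h f, hf ψ'])

theorem character_eq_of_character_incT_eq {x : X} {ψ ψ' : characterSpace ℂ E}
    (h : ∀ f : Bt, ψ (Q.incT f x) = ψ' (Q.incT f x)) : ψ = ψ' := by
  ext a
  obtain ⟨f, hf⟩ := Q.exists_incT_eq_const a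
  simpa only [hf] using h f

end AdmissibleQuadruple

/-- For an admissible quadruple `(X, E, B, B̃)`, the associated map
`β : X × M(E) → M(B̃)`, `(x, ψ) ↦ ψ ∘ e_x`, is well defined (each `ψ ∘ e_x` is a character
of `B̃`) and injective. -/
theorem admissibleQuadruple_beta_wellDefined_injective
    (X : Type*) [TopologicalSpace X] [CompactSpace X] [T2Space X]
    (E : Type*) [NormedCommRing E] [NormedAlgebra ℂ E] [CompleteSpace E]
    (B : Type*) [NormedCommRing B] [NormedAlgebra ℂ B] [CompleteSpace B]
    (Bt : Type*) [NormedCommRing Bt] [NormedAlgebra ℂ Bt] [CompleteSpace Bt]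
    (Q : AdmissibleQuadruple X E B Bt) :
    (∀ (x : X) (ψ : characterSpace ℂ E), ∃ φ : characterSpace ℂ Bt,
        ∀ f : Bt, φ f = ψ (Q.incT f x)) ∧
    (∀ (x x' : X) (ψ ψ' : characterSpace ℂ E),
        (∀ f : Bt, ψ (Q.incT f x) = ψ' (Q.incT f x')) → x = x' ∧ ψ = ψ') := by
  refine ⟨CharacterSpace.exists_apply_eq_apply_eval Q.incT, fun x x' ψ ψ' h => ?_⟩
  obtain rfl := Q.eq_of_character_incT_eq h
  exact ⟨rfl, Q.character_eq_of_character_incT_eq h⟩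
end
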